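/- arXiv:1209.1172 — 3 statements merged into one kernel-verified Lean document; each statement's English description precedes it below -/
import Mathlib

section
/- Let R = ⊕_{n≥0} R_n be a nonnegatively graded noetherian ℂ-algebra with R_0 finite-dimensional. Then the natural functor D^b(R-gmod_fd) → D^b(R-gmod) from the bounded derived category of finite-dimensional graded R-modules to the bounded derived category of finitely generated graded R-modules is fully faithful. -/
open CategoryTheory DirectSum

/-!
Since `R` is nonnegatively graded, the elements of a graded `R`-module living in degrees `> N`
form a submodule. Given an exact sequence `0 → B → Mⁱ → ⋯ → M¹ → A* → 0` with `A*` and `B`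
finite-dimensional, choose `N` bounding the degrees of `A*` and `B` and divide every `Mʲ` by its
part in degrees `> N`. Nothing is divided out of the end terms, and exactness survives because it
can be checked degree by degree. The quotients are finite-dimensional: the graded pieces of a
finitely generated graded module are finite-dimensional (by induction on the degree, as `R` is
noetherian and `R₀` finite-dimensional), and its degrees are bounded below.

The quotient map is a morphism of extensions, which gives surjectivity on `Ext`. The construction
is functorial in morphisms of extensions with the same end terms, so it carries a chain of
morphisms connecting two finite-dimensional extensions to a chain of finite-dimensional ones.
-/

structure GradedSeq (A : Type) [Ring A] [Algebra ℂ A] (𝒜 : ℤ → Submodule ℂ A)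
    (i : ℕ) where
  X : ℕ → ModuleCat.{0} A
  d : ∀ n : ℕ, X (n + 1) ⟶ X n
  gr : ∀ n : ℕ, ℤ → AddSubgroup (X n)
  internal : ∀ n : ℕ, DirectSum.IsInternal (gr n)
  compat : ∀ (n : ℕ) (j k : ℤ) (a : A) (m : X n),
    a ∈ 𝒜 j → m ∈ gr n k → a • m ∈ gr n (j + k)
  dgr : ∀ (n : ℕ) (k : ℤ) (m : X (n + 1)), m ∈ gr (n + 1) k → d n m ∈ gr n k
  fg : ∀ n : ℕ, Module.Finite A (X n)
  inj : Function.Injective ⇑(d i)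
  surj : Function.Surjective ⇑(d 0)
  exact : ∀ n : ℕ, n < i → Function.Exact ⇑(d (n + 1)) ⇑(d n)

def GradedSeq.IsFD {A : Type} [Ring A] [Algebra ℂ A] {𝒜 : ℤ → Submodule ℂ A} {i : ℕ}
    (S : GradedSeq A 𝒜 i) : Prop :=
  ∀ n : ℕ, @FiniteDimensional ℂ (RestrictScalars ℂ A (S.X n)) _ _ (RestrictScalars.module ℂ A (S.X n))

/-- A morphism of exact sequences which is the identity on the two end terms (including
their gradings); this is the elementary relation generating equivalence of Yoneda
extensions. -/
def GradedSeq.Mor {A : Type} [Ring A] [Algebra ℂ A] {𝒜 : ℤ → Submodule ℂ A} {i : ℕ}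
    (S T : GradedSeq A 𝒜 i) : Prop :=
  ∃ (h0 : S.X 0 = T.X 0) (htop : S.X (i + 1) = T.X (i + 1))
    (φ : ∀ n : ℕ, S.X n ⟶ T.X n),
    (∀ n : ℕ, S.d n ≫ φ n = φ (n + 1) ≫ T.d n) ∧
    (∀ (n : ℕ) (k : ℤ) (m : S.X n), m ∈ S.gr n k → φ n m ∈ T.gr n k) ∧
    φ 0 = eqToHom h0 ∧ φ (i + 1) = eqToHom htop ∧
    (∀ k : ℤ, AddSubgroup.map (LinearMap.toAddMonoidHom (eqToHom h0 : S.X 0 ⟶ T.X 0).hom)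
        (S.gr 0 k) = T.gr 0 k) ∧
    (∀ k : ℤ, AddSubgroup.map
        (LinearMap.toAddMonoidHom (eqToHom htop : S.X (i + 1) ⟶ T.X (i + 1)).hom)
        (S.gr (i + 1) k) = T.gr (i + 1) k)

namespace DirectSum.IsInternal

section Proj

variable {ι M σ : Type*} [DecidableEq ι] [AddCommMonoid M] [SetLike σ M]
  [AddSubmonoidClass σ M] {ℳ : ι → σ} (h : IsInternal ℳ)

noncomputable def proj (k : ι) : M →+ M :=
  letI := h.chooseDecomposition
  (AddSubmonoidClass.subtype (ℳ k)).comp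
    ((DFinsupp.evalAddMonoidHom k).comp (decomposeAddEquiv ℳ).toAddMonoidHom)

theorem proj_apply (k : ι) (m : M) :
    h.proj k m = (letI := h.chooseDecomposition; (decompose ℳ m k : M)) := rfl

theorem proj_mem (k : ι) (m : M) : h.proj k m ∈ ℳ k := SetLike.coe_mem _

theorem proj_of_mem {k : ι} {m : M} (hm : m ∈ ℳ k) : h.proj k m = m :=
  let _ := h.chooseDecomposition
  decompose_of_mem_same ℳ hm

theorem proj_of_mem_of_ne {k l : ι} {m : M} (hm : m ∈ ℳ l) (hlk : l ≠ k) : h.proj k m = 0 :=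
  let _ := h.chooseDecomposition
  decompose_of_mem_ne ℳ hm hlk

theorem exists_finset_sum_proj (m : M) :
    ∃ s : Finset ι, (∀ k ∉ s, h.proj k m = 0) ∧ ∑ k ∈ s, h.proj k m = m := by
  classical
  let _ := h.chooseDecomposition
  refine ⟨(decompose ℳ m).support, fun k hk => ?_, sum_support_decompose ℳ m⟩
  rw [proj_apply, DFinsupp.notMem_support_iff.mp hk, ZeroMemClass.coe_zero]

theorem sum_proj_of_forall_notMem {s : Finset ι} {m : M} (hs : ∀ k ∉ s, h.proj k m = 0) :
    ∑ k ∈ s, h.proj k m = m := by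
  classical
  obtain ⟨t, ht0, ht⟩ := h.exists_finset_sum_proj m
  rw [Finset.sum_subset Finset.subset_union_left fun k _ hk => hs k hk,
    ← Finset.sum_subset Finset.subset_union_right fun k _ hk => ht0 k hk, ht]

theorem exists_finset_proj_eq_zero (T : Finset M) :
    ∃ L : Finset ι, ∀ t ∈ T, ∀ l ∉ L, h.proj l t = 0 := by
  classical
  choose s hs0 _ using h.exists_finset_sum_proj
  exact ⟨T.biUnion s, fun t ht l hl => hs0 t l fun hl' => hl (Finset.mem_biUnion.2 ⟨t, ht, hl'⟩)⟩

theorem proj_sum_of_mem (s : Finset ι) {y : ι → M} (hy : ∀ l ∈ s, y l ∈ ℳ l) (k : ι) :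
    h.proj k (∑ l ∈ s, y l) = if k ∈ s then y k else 0 := by
  rw [map_sum, ← Finset.sum_ite_eq s k y]
  refine Finset.sum_congr rfl fun l hl => ?_
  obtain rfl | hlk := eq_or_ne l k
  · rw [if_pos rfl, h.proj_of_mem (hy l hl)]
  · rw [if_neg hlk.symm, h.proj_of_mem_of_ne (hy l hl) hlk]

theorem eq_zero_of_forall_proj_eq_zero {m : M} (hm : ∀ k, h.proj k m = 0) : m = 0 := by
  obtain ⟨s, -, hs⟩ := h.exists_finset_sum_proj m
  rw [← hs, Finset.sum_eq_zero fun k _ => hm k]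

theorem exists_proj_eq_ite (p : ι → Prop) [DecidablePred p] (m : M) :
    ∃ m' : M, ∀ k, h.proj k m' = if p k then h.proj k m else 0 := by
  obtain ⟨s, hs0, -⟩ := h.exists_finset_sum_proj m
  refine ⟨∑ k ∈ s.filter p, h.proj k m, fun k => ?_⟩
  rw [h.proj_sum_of_mem _ fun l _ => h.proj_mem l m]
  by_cases hk : k ∈ s
  · simp only [Finset.mem_filter, hk, true_and]
  · simp only [Finset.mem_filter, hk, false_and, hs0 k hk, ite_self]

theorem proj_map {M' σ' : Type*} [AddCommMonoid M'] [SetLike σ' M'] [AddSubmonoidClass σ' M']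
    {ℳ' : ι → σ'} (h' : IsInternal ℳ') {F : Type*} [FunLike F M M'] [AddMonoidHomClass F M M']
    (f : F) (hf : ∀ k, ∀ m ∈ ℳ k, f m ∈ ℳ' k) (k : ι) (m : M) :
    h'.proj k (f m) = f (h.proj k m) := by
  obtain ⟨s, hs0, hs⟩ := h.exists_finset_sum_proj m
  conv_lhs => rw [← hs, map_sum]
  rw [h'.proj_sum_of_mem s (fun l _ => hf l _ (h.proj_mem l m))]
  split_ifs with hk
  · rfl
  · rw [hs0 k hk, map_zero]

end Proj

theorem addSubgroup_map {ι M M' : Type*} [DecidableEq ι] [AddCommGroup M] [AddCommGroup M']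
    {ℳ : ι → AddSubgroup M} (h : IsInternal ℳ) (f : M →+ M') (hf : Function.Surjective f)
    (hker : ∀ m, f m = 0 → ∀ k, f (h.proj k m) = 0) : IsInternal fun k => (ℳ k).map f := by
  classical
  constructor
  · rw [injective_iff_map_eq_zero]
    intro x hx
    choose y hy hfy using fun k => (x k).2
    have hsum : f (∑ k ∈ x.support, y k) = 0 := by
      rw [map_sum, ← hx, coeAddMonoidHom_eq_dfinsuppSum]
      exact Finset.sum_congr rfl fun k _ => hfy k
    ext k
    by_cases hk : k ∈ x.support
    · have := hker _ hsum k
      rwa [h.proj_sum_of_mem _ fun l _ => hy l, if_pos hk, hfy] at this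
    · exact congrArg Subtype.val (DFinsupp.notMem_support_iff.mp hk)
  · intro m'
    obtain ⟨m, rfl⟩ := hf m'
    obtain ⟨s, -, hs⟩ := h.exists_finset_sum_proj m
    refine ⟨∑ k ∈ s, DirectSum.of (fun k => (ℳ k).map f) k
      ⟨f (h.proj k m), AddSubgroup.mem_map_of_mem f (h.proj_mem k m)⟩, ?_⟩
    simp only [map_sum, coeAddMonoidHom_of]
    rw [← map_sum, hs]

theorem exists_forall_lt_eq_bot {K M : Type*} [DivisionRing K] [AddCommGroup M] [Module K M]
    [FiniteDimensional K M] {ℳ : ℤ → Submodule K M} (h : IsInternal ℳ) :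
    ∃ N : ℤ, ∀ k, N < k → ℳ k = ⊥ := by
  have := h.submodule_iSupIndep.fintypeNeBotOfFiniteDimensional
  obtain ⟨N, hN⟩ := (Set.finite_coe_iff.mp (Finite.of_fintype {k // ℳ k ≠ ⊥})).bddAbove
  exact ⟨N, fun k hk => by_contra fun hne => (hN hne).not_gt hk⟩

end DirectSum.IsInternal

theorem Submodule.finiteDimensional_of_le_finset_sup {ι K V : Type*} [DivisionRing K]
    [AddCommGroup V] [Module K V] {P : Submodule K V} {s : Finset ι} {S : ι → Submodule K V}
    (hS : ∀ i ∈ s, FiniteDimensional K (S i)) (hP : P ≤ s.sup S) : FiniteDimensional K P :=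
  have := Finset.sup_induction (p := fun W : Submodule K V => FiniteDimensional K W)
    (Module.Finite.bot K V) (fun _ h₁ _ h₂ => @Submodule.finite_sup _ _ _ _ _ _ _ h₁ h₂) hS
  Submodule.finiteDimensional_of_le hP

section NonnegGrading

open SetLike

variable {K A : Type*} [CommSemiring K] [Ring A] [Algebra K A] {𝒜 : ℤ → Submodule K A}
  [GradedRing 𝒜]

theorem DirectSum.IsInternal.proj_smul_of_mem {M σ : Type*} [AddCommGroup M] [Module A M]
    [SetLike σ M] [AddSubgroupClass σ M] {ℳ : ℤ → σ} [GradedSMul 𝒜 ℳ] (h : IsInternal ℳ)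
    {l : ℤ} {x : M} (hx : x ∈ ℳ l) (a : A) (k : ℤ) :
    h.proj k (a • x) = GradedRing.proj 𝒜 (k - l) a • x := by
  classical
  have hmem : ∀ j, (decompose 𝒜 a j : A) • x ∈ ℳ (j + l) := fun j =>
    GradedSMul.smul_mem (decompose 𝒜 a j).2 hx
  conv_lhs => rw [← sum_support_decompose 𝒜 a, Finset.sum_smul, map_sum]
  rw [Finset.sum_eq_single (k - l)]
  · exact h.proj_of_mem (by simpa using hmem (k - l))
  · intro j _ hj
    exact h.proj_of_mem_of_ne (hmem j) fun hjk => hj (by omega)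
  · intro hk
    rw [DFinsupp.notMem_support_iff.mp hk, ZeroMemClass.coe_zero, zero_smul, map_zero]

variable (hnonneg : ∀ n : ℤ, n < 0 → 𝒜 n = ⊥)
include hnonneg

theorem GradedRing.proj_eq_zero_of_neg {j : ℤ} (hj : j < 0) (a : A) :
    GradedRing.proj 𝒜 j a = 0 :=
  (Submodule.mem_bot K).mp (hnonneg j hj ▸ SetLike.coe_mem (decompose 𝒜 a j))

variable {M σ : Type*} [AddCommGroup M] [Module A M] [SetLike σ M] [AddSubgroupClass σ M]
  {ℳ : ℤ → σ} [GradedSMul 𝒜 ℳ] (h : IsInternal ℳ)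

def DirectSum.IsInternal.degreeGT (N : ℤ) : Submodule A M where
  carrier := {m | ∀ k ≤ N, h.proj k m = 0}
  add_mem' ha hb k hk := by rw [map_add, ha k hk, hb k hk, add_zero]
  zero_mem' k _ := map_zero _
  smul_mem' a m hm k hk := by
    obtain ⟨s, -, hs⟩ := h.exists_finset_sum_proj m
    rw [← hs, Finset.smul_sum, map_sum]
    refine Finset.sum_eq_zero fun l _ => ?_
    rw [h.proj_smul_of_mem (𝒜 := 𝒜) (h.proj_mem l m)]
    by_cases hl : l ≤ N
    · rw [hm l hl, smul_zero]
    · rw [GradedRing.proj_eq_zero_of_neg hnonneg (by omega), zero_smul]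

namespace DirectSum.IsInternal

theorem mem_degreeGT_of_mem {N l : ℤ} {m : M} (hm : m ∈ ℳ l) (hl : N < l) :
    m ∈ h.degreeGT hnonneg N := fun _ hk => h.proj_of_mem_of_ne hm (by omega)

theorem proj_mem_degreeGT {N : ℤ} {m : M} (hm : m ∈ h.degreeGT hnonneg N) (k : ℤ) :
    h.proj k m ∈ h.degreeGT hnonneg N := by
  by_cases hk : k ≤ N
  · rw [hm k hk]
    exact zero_mem _
  · exact h.mem_degreeGT_of_mem hnonneg (h.proj_mem k m) (not_le.mp hk)

theorem degreeGT_eq_bot {N : ℤ} (hN : ∀ k, N < k → ∀ m ∈ ℳ k, m = 0) :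
    h.degreeGT hnonneg N = ⊥ :=
  (Submodule.eq_bot_iff _).mpr fun m hm => h.eq_zero_of_forall_proj_eq_zero fun k =>
    if hk : k ≤ N then hm k hk else hN k (not_le.mp hk) _ (h.proj_mem k m)

theorem exists_sub_mem_degreeGT (N : ℤ) (m : M) :
    ∃ m', m - m' ∈ h.degreeGT hnonneg N ∧ ∀ k, N < k → h.proj k m' = 0 := by
  classical
  obtain ⟨m', hm'⟩ := h.exists_proj_eq_ite (· ≤ N) m
  refine ⟨m', fun k hk => ?_, fun k hk => ?_⟩
  · rw [map_sub, hm', if_pos hk, sub_self]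
  · rw [hm', if_neg (not_le.mpr hk)]

theorem map_mem_degreeGT {M' σ' : Type*} [AddCommGroup M'] [Module A M'] [SetLike σ' M']
    [AddSubgroupClass σ' M'] {ℳ' : ℤ → σ'} [GradedSMul 𝒜 ℳ'] (h' : IsInternal ℳ')
    {F : Type*} [FunLike F M M'] [AddMonoidHomClass F M M'] (f : F)
    (hf : ∀ k, ∀ m ∈ ℳ k, f m ∈ ℳ' k) {N : ℤ} {m : M} (hm : m ∈ h.degreeGT hnonneg N) :
    f m ∈ h'.degreeGT hnonneg N := fun k hk => by
  rw [h.proj_map h' f hf, hm k hk, map_zero]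

include h in
theorem exists_forall_le_mem_eq_zero [Module.Finite A M] :
    ∃ N : ℤ, ∀ k ≤ N, ∀ m ∈ ℳ k, m = 0 := by
  obtain ⟨T, hT⟩ := Module.Finite.fg_top (R := A) (M := M)
  obtain ⟨L, hL⟩ := h.exists_finset_proj_eq_zero T
  obtain ⟨b, hb⟩ := L.bddBelow
  have hspan : Submodule.span A (T : Set M) ≤ h.degreeGT hnonneg (b - 1) :=
    Submodule.span_le.mpr fun t ht k hk => hL t ht k fun hkL => by linarith [hb hkL]
  refine ⟨b - 1, fun k hk m hm => ?_⟩
  rw [← h.proj_of_mem hm]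
  exact hspan (hT ▸ Submodule.mem_top) k hk

end DirectSum.IsInternal

end NonnegGrading

section Finiteness

open SetLike

variable {K A : Type*} [Field K] [Ring A] [Algebra K A] {𝒜 : ℤ → Submodule K A} [GradedRing 𝒜]

theorem DirectSum.IsInternal.proj_mem_finset_sup_of_mem_span {M : Type*} [AddCommGroup M]
    [Module A M] [Module K M] [IsScalarTower K A M] {ℳ : ℤ → Submodule K M} [GradedSMul 𝒜 ℳ]
    (h : IsInternal ℳ) {T : Finset M} {L : Finset ℤ} (hL : ∀ t ∈ T, ∀ l ∉ L, h.proj l t = 0)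
    {x : M} (hx : x ∈ Submodule.span A (T : Set M)) (k : ℤ) :
    h.proj k x ∈ (T ×ˢ L).sup fun p =>
      (𝒜 (k - p.2)).map ((LinearMap.toSpanSingleton A M (h.proj p.2 p.1)).restrictScalars K) := by
  obtain ⟨c, -, rfl⟩ := Submodule.mem_span_finset.mp hx
  rw [map_sum]
  refine Submodule.sum_mem _ fun t ht => ?_
  have hct : c t • t = ∑ l ∈ L, c t • h.proj l t := by
    rw [← Finset.smul_sum, h.sum_proj_of_forall_notMem (hL t ht)]
  rw [hct, map_sum]
  refine Submodule.sum_mem _ fun l hl => ?_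
  rw [h.proj_smul_of_mem (𝒜 := 𝒜) (h.proj_mem l t)]
  exact Finset.le_sup (f := fun p : M × ℤ =>
      (𝒜 (k - p.2)).map ((LinearMap.toSpanSingleton A M (h.proj p.2 p.1)).restrictScalars K))
    (Finset.mk_mem_product ht hl) ⟨_, SetLike.coe_mem _, rfl⟩

variable [IsNoetherianRing A] (hnonneg : ∀ n : ℤ, n < 0 → 𝒜 n = ⊥)
  (hfd0 : FiniteDimensional K (𝒜 0))
include hnonneg hfd0

theorem GradedRing.finiteDimensional_of_isNoetherianRing (j : ℤ) :
    FiniteDimensional K (𝒜 j) := by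
  set hA : IsInternal 𝒜 := Decomposition.isInternal 𝒜
  obtain ⟨T, hT⟩ := IsNoetherian.noetherian (hA.degreeGT hnonneg 0)
  obtain ⟨L, hL⟩ := hA.exists_finset_proj_eq_zero T
  have hL' : ∀ t ∈ T, ∀ l ∉ L.filter (0 < ·), hA.proj l t = 0 := fun t ht l hl => by
    by_cases hl0 : l ≤ 0
    · exact (hT ▸ Submodule.subset_span ht : t ∈ hA.degreeGT hnonneg 0) l hl0
    · exact hL t ht l fun hlL => hl (Finset.mem_filter.mpr ⟨hlL, by omega⟩)
  suffices ∀ n : ℕ, ∀ j : ℤ, j < n → FiniteDimensional K (𝒜 j) from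
    this (j.toNat + 1) j (by omega)
  intro n
  induction n with
  | zero =>
    intro j hj
    rw [hnonneg j (by omega)]
    infer_instance
  | succ n ih =>
    intro j hj
    rcases lt_or_eq_of_le (Int.lt_add_one_iff.mp (by exact_mod_cast hj) : j ≤ n) with hjn | rfl
    · exact ih j hjn
    obtain rfl | hn := Nat.eq_zero_or_pos n
    · exact hfd0
    -- `𝒜 n` lies in the ideal `𝒜₊` generated by `T`, so it is spanned by the products of the
    -- pieces `𝒜 (n - l)`, `l > 0`, with components of the generators.
    have hle : 𝒜 n ≤ _ := fun x hx => hA.proj_of_mem hx ▸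
      hA.proj_mem_finset_sup_of_mem_span (𝒜 := 𝒜) hL' (hT ▸ hA.mem_degreeGT_of_mem hnonneg hx
        (by exact_mod_cast hn)) n
    refine Submodule.finiteDimensional_of_le_finset_sup (fun p hp => ?_) hle
    have := ih (n - p.2) (by have := (Finset.mem_filter.mp (Finset.mem_product.mp hp).2).2; omega)
    infer_instance

variable {M : Type*} [AddCommGroup M] [Module A M] [Module K M] [IsScalarTower K A M]
  {ℳ : ℤ → Submodule K M} [GradedSMul 𝒜 ℳ] (h : IsInternal ℳ) [Module.Finite A M]
include h

theorem DirectSum.IsInternal.finiteDimensional_of_finite (k : ℤ) : FiniteDimensional K (ℳ k) := by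
  have := GradedRing.finiteDimensional_of_isNoetherianRing hnonneg hfd0
  obtain ⟨T, hT⟩ := Module.Finite.fg_top (R := A) (M := M)
  obtain ⟨L, hL⟩ := h.exists_finset_proj_eq_zero T
  exact Submodule.finiteDimensional_of_le_finset_sup (fun p _ => inferInstance)
    fun x hx => h.proj_of_mem hx ▸
      h.proj_mem_finset_sup_of_mem_span (𝒜 := 𝒜) hL (hT ▸ Submodule.mem_top) k

theorem DirectSum.IsInternal.finiteDimensional_of_surjective_of_le_ker {Q : Type*}
    [AddCommGroup Q] [Module K Q] (f : M →ₗ[K] Q) (hf : Function.Surjective f) {N : ℤ}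
    (hN : ∀ k, N < k → ℳ k ≤ LinearMap.ker f) : FiniteDimensional K Q := by
  have := h.finiteDimensional_of_finite hnonneg hfd0
  obtain ⟨b, hb⟩ := h.exists_forall_le_mem_eq_zero hnonneg
  set W := (Finset.Ioc b N).sup ℳ
  refine Module.Finite.of_surjective (f.comp W.subtype) fun q => ?_
  obtain ⟨m, rfl⟩ := hf q
  obtain ⟨s, hs0, -⟩ := h.exists_finset_sum_proj m
  classical
  refine ⟨⟨∑ k ∈ Finset.Ioc b N, h.proj k m, Submodule.sum_mem _ fun k hk =>
    Finset.le_sup (f := ℳ) hk (h.proj_mem k m)⟩, ?_⟩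
  have hm := h.sum_proj_of_forall_notMem (s := s ∪ Finset.Ioc b N)
    fun k hk => hs0 k fun hks => hk (Finset.mem_union_left _ hks)
  conv_rhs => rw [← hm, map_sum]
  rw [LinearMap.comp_apply, Submodule.subtype_apply, map_sum]
  refine Finset.sum_subset Finset.subset_union_right fun k _ hk => ?_
  rcases le_or_gt k b with hkb | hkb
  · rw [hb k hkb _ (h.proj_mem k m), map_zero]
  · exact hN k (by simpa [hkb] using hk) (h.proj_mem k m)

end Finiteness

section GradedPieceSubmodule

open SetLike

variable {K A X : Type*} [Field K] [Ring A] [Algebra K A] {𝒜 : ℤ → Submodule K A}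
  [GradedRing 𝒜] [AddCommGroup X] [Module A X] [Module K X] [IsScalarTower K A X]
  {gr : ℤ → AddSubgroup X} [GradedSMul 𝒜 gr]

variable (K 𝒜 gr) in
def gradedPieceSubmodule (k : ℤ) : Submodule K X where
  carrier := gr k
  add_mem' := add_mem
  zero_mem' := zero_mem _
  smul_mem' c m hm := by
    simpa [algebraMap_smul] using GradedSMul.smul_mem (SetLike.algebraMap_mem_graded 𝒜 c) hm

instance : GradedSMul 𝒜 (gradedPieceSubmodule K 𝒜 gr) :=
  ⟨fun _ _ _ _ ha hm => GradedSMul.smul_mem (B := gr) ha hm⟩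

variable (𝒜) in
include 𝒜 in
theorem DirectSum.IsInternal.exists_forall_lt_mem_eq_zero [FiniteDimensional K X]
    (h : IsInternal gr) : ∃ N : ℤ, ∀ k, N < k → ∀ m ∈ gr k, m = 0 := by
  obtain ⟨N, hN⟩ :=
    (show IsInternal (gradedPieceSubmodule K 𝒜 gr) from h).exists_forall_lt_eq_bot
  exact ⟨N, fun k hk m hm => (Submodule.mem_bot K).mp (hN k hk ▸ hm)⟩

theorem DirectSum.IsInternal.finiteDimensional_of_surjective_of_map_eq_zero [IsNoetherianRing A]
    (hnonneg : ∀ n : ℤ, n < 0 → 𝒜 n = ⊥) (hfd0 : FiniteDimensional K (𝒜 0)) (h : IsInternal gr)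
    [Module.Finite A X] {Y : Type*} [AddCommGroup Y] [Module A Y] [Module K Y]
    [IsScalarTower K A Y] (f : X →ₗ[A] Y) (hf : Function.Surjective f) {N : ℤ}
    (hN : ∀ k, N < k → ∀ m ∈ gr k, f m = 0) : FiniteDimensional K Y :=
  (show IsInternal (gradedPieceSubmodule K 𝒜 gr) from h).finiteDimensional_of_surjective_of_le_ker
    hnonneg hfd0 (f.restrictScalars K) hf fun k hk m hm => hN k hk m hm

end GradedPieceSubmodule

section LiftOfSurjective

variable {R M M' M₂ : Type*} [Ring R] [AddCommGroup M] [Module R M] [AddCommGroup M']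
  [Module R M'] [AddCommGroup M₂] [Module R M₂] (q : M →ₗ[R] M') (hq : Function.Surjective q)
  (f : M →ₗ[R] M₂) (h : LinearMap.ker q ≤ LinearMap.ker f)

noncomputable def LinearMap.liftOfSurjective : M' →ₗ[R] M₂ :=
  (LinearMap.ker q).liftQ f h ∘ₗ (q.quotKerEquivOfSurjective hq).symm.toLinearMap

theorem LinearMap.liftOfSurjective_apply (m : M) : q.liftOfSurjective hq f h (q m) = f m := by
  rw [liftOfSurjective, LinearMap.comp_apply, LinearEquiv.coe_coe,
    show (q.quotKerEquivOfSurjective hq).symm (q m) = Submodule.Quotient.mk m from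
      (LinearEquiv.symm_apply_eq _).mpr rfl, Submodule.liftQ_apply]

end LiftOfSurjective

namespace ModuleCat

theorem finite_restrictScalars_of_surjective {K A : Type*} [Field K] [Ring A] [Algebra K A]
    {X Y : ModuleCat A} (f : X ⟶ Y) (hf : Function.Surjective f)
    [Module.Finite K (RestrictScalars K A X)] : Module.Finite K (RestrictScalars K A Y) := by
  let _ := Module.restrictScalars K A X
  let _ := Module.restrictScalars K A Y
  have := IsScalarTower.restrictScalars K A X
  have := IsScalarTower.restrictScalars K A Y
  have : Module.Finite K X := ‹Module.Finite K (RestrictScalars K A X)›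
  exact Module.Finite.of_surjective (f.hom.restrictScalars K) hf

variable {A : Type} [Ring A]

theorem eqToHom_bijective {X Y : ModuleCat.{0} A} (h : X = Y) :
    Function.Bijective (eqToHom h) := by
  subst h
  exact Function.bijective_id

theorem eqToHom_apply_eq_zero_iff {X Y : ModuleCat.{0} A} (h : X = Y) {x : X} :
    eqToHom h x = 0 ↔ x = 0 := by
  subst h
  rfl

/-- The condition that `GradedSeq.Mor` imposes on the end terms. -/
def IsGradedIdentity {X Y : ModuleCat.{0} A} (f : X ⟶ Y) (gX : ℤ → AddSubgroup X)
    (gY : ℤ → AddSubgroup Y) : Prop :=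
  ∃ h : X = Y, f = eqToHom h ∧
    ∀ k, AddSubgroup.map (LinearMap.toAddMonoidHom (eqToHom h : X ⟶ Y).hom) (gX k) = gY k

theorem isGradedIdentity_id {X : ModuleCat.{0} A} (g : ℤ → AddSubgroup X) :
    IsGradedIdentity (𝟙 X) g g :=
  ⟨rfl, rfl, fun k => AddSubgroup.map_id (g k)⟩

theorem IsGradedIdentity.bounded_iff {X Y : ModuleCat.{0} A} {f : X ⟶ Y}
    {gX : ℤ → AddSubgroup X} {gY : ℤ → AddSubgroup Y} (hf : IsGradedIdentity f gX gY) (N : ℤ) :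
    (∀ k, N < k → ∀ m ∈ gX k, m = 0) ↔ (∀ k, N < k → ∀ m ∈ gY k, m = 0) := by
  obtain ⟨rfl, -, hg⟩ := hf
  obtain rfl : gX = gY := funext fun k => (AddSubgroup.map_id (gX k)).symm.trans (hg k)
  rfl

theorem IsGradedIdentity.of_comp_eq_comp {X X' Y Y' : ModuleCat.{0} A} {p : X ⟶ X'}
    {φ : X ⟶ Y} {q : Y ⟶ Y'} {ψ : X' ⟶ Y'} {gX : ℤ → AddSubgroup X} {gX' : ℤ → AddSubgroup X'}
    {gY : ℤ → AddSubgroup Y} {gY' : ℤ → AddSubgroup Y'} (hp : IsGradedIdentity p gX gX')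
    (hφ : IsGradedIdentity φ gX gY) (hq : IsGradedIdentity q gY gY') (h : p ≫ ψ = φ ≫ q) :
    IsGradedIdentity ψ gX' gY' := by
  obtain ⟨rfl, rfl, hp⟩ := hp
  obtain ⟨rfl, rfl, hφ⟩ := hφ
  obtain ⟨rfl, rfl, hq⟩ := hq
  simp only [eqToHom_refl, Category.id_comp] at h
  refine ⟨rfl, h, fun k => ?_⟩
  rw [← hp, ← hq, ← hφ]

end ModuleCat

namespace GradedSeq

variable {A : Type} [Ring A] [Algebra ℂ A] {𝒜 : ℤ → Submodule ℂ A} {i : ℕ}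

instance instGradedSMul (S : GradedSeq A 𝒜 i) (n : ℕ) : SetLike.GradedSMul 𝒜 (S.gr n) :=
  ⟨fun _ _ _ _ ha hm => S.compat n _ _ _ _ ha hm⟩

theorem proj_d (S : GradedSeq A 𝒜 i) (n : ℕ) (k : ℤ) (m : S.X (n + 1)) :
    (S.internal n).proj k (S.d n m) = S.d n ((S.internal (n + 1)).proj k m) :=
  (S.internal (n + 1)).proj_map (S.internal n) (S.d n).hom (S.dgr n) k m

theorem exists_forall_lt_mem_eq_zero (S : GradedSeq A 𝒜 i) [GradedAlgebra 𝒜] (n : ℕ)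
    [Module.Finite ℂ (RestrictScalars ℂ A (S.X n))] :
    ∃ N : ℤ, ∀ k, N < k → ∀ m ∈ S.gr n k, m = 0 := by
  let _ := Module.restrictScalars ℂ A (S.X n)
  have := IsScalarTower.restrictScalars ℂ A (S.X n)
  have : FiniteDimensional ℂ (S.X n) := ‹Module.Finite ℂ (RestrictScalars ℂ A (S.X n))›
  exact (S.internal n).exists_forall_lt_mem_eq_zero 𝒜

theorem mor_iff {S T : GradedSeq A 𝒜 i} :
    S.Mor T ↔ ∃ φ : ∀ n, S.X n ⟶ T.X n, (∀ n, S.d n ≫ φ n = φ (n + 1) ≫ T.d n) ∧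
      (∀ (n : ℕ) (k : ℤ) (m : S.X n), m ∈ S.gr n k → φ n m ∈ T.gr n k) ∧
      ∀ n, n = 0 ∨ n = i + 1 → ModuleCat.IsGradedIdentity (φ n) (S.gr n) (T.gr n) := by
  constructor
  · rintro ⟨h0, htop, φ, hsq, hgr, hφ0, hφtop, hgr0, hgrtop⟩
    exact ⟨φ, hsq, hgr, by rintro n (rfl | rfl); exacts [⟨h0, hφ0, hgr0⟩, ⟨htop, hφtop, hgrtop⟩]⟩
  · rintro ⟨φ, hsq, hgr, hend⟩
    obtain ⟨h0, hφ0, hgr0⟩ := hend 0 (Or.inl rfl)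
    obtain ⟨htop, hφtop, hgrtop⟩ := hend (i + 1) (Or.inr rfl)
    exact ⟨h0, htop, φ, hsq, hgr, hφ0, hφtop, hgr0, hgrtop⟩

theorem mor_refl (S : GradedSeq A 𝒜 i) : S.Mor S :=
  mor_iff.mpr ⟨fun n => 𝟙 _, fun n => by simp, fun _ _ _ hm => hm,
    fun n _ => ModuleCat.isGradedIdentity_id _⟩

/-- A graded subcomplex of `S` which vanishes at the end terms, is everything beyond them, and
has an exact quotient. -/
structure Truncation (S : GradedSeq A 𝒜 i) where
  C : ∀ n : ℕ, Submodule A (S.X n)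
  C_of_end : ∀ n, n = 0 ∨ n = i + 1 → C n = ⊥
  C_of_le : ∀ n, i + 2 ≤ n → C n = ⊤
  proj_mem : ∀ n k, ∀ m ∈ C n, (S.internal n).proj k m ∈ C n
  d_mem : ∀ n ≤ i, ∀ m ∈ C (n + 1), S.d n m ∈ C n
  eq_zero_of_d_mem : ∀ m, S.d i m ∈ C i → m = 0
  mem_sup_of_d_mem : ∀ n < i, ∀ m, S.d n m ∈ C n →
    m ∈ LinearMap.range (S.d (n + 1)).hom ⊔ C (n + 1)

namespace Truncation

section Quotient

variable {S : GradedSeq A 𝒜 i} (T : Truncation S)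

/-- The end terms are kept literally, as `Mor` compares them by equality. -/
def obj (n : ℕ) : ModuleCat.{0} A :=
  if n = 0 ∨ n = i + 1 then S.X n else ModuleCat.of A (S.X n ⧸ T.C n)

theorem obj_of_end {n : ℕ} (hn : n = 0 ∨ n = i + 1) : T.obj n = S.X n := if_pos hn

theorem obj_of_not_end {n : ℕ} (hn : ¬(n = 0 ∨ n = i + 1)) :
    T.obj n = ModuleCat.of A (S.X n ⧸ T.C n) := if_neg hn

noncomputable def π (n : ℕ) : S.X n ⟶ T.obj n :=
  if hn : n = 0 ∨ n = i + 1 then eqToHom (T.obj_of_end hn).symm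
  else ModuleCat.ofHom (T.C n).mkQ ≫ eqToHom (T.obj_of_not_end hn).symm

theorem π_of_end {n : ℕ} (hn : n = 0 ∨ n = i + 1) : T.π n = eqToHom (T.obj_of_end hn).symm :=
  dif_pos hn

theorem π_surjective (n : ℕ) : Function.Surjective (T.π n) := by
  unfold π
  split_ifs with hn
  · exact (ModuleCat.eqToHom_bijective _).2
  · exact (ModuleCat.eqToHom_bijective _).2.comp (T.C n).mkQ_surjective

theorem π_eq_zero_iff {n : ℕ} {m : S.X n} : T.π n m = 0 ↔ m ∈ T.C n := by
  unfold π
  split_ifs with hn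
  · rw [T.C_of_end n hn, Submodule.mem_bot, ModuleCat.eqToHom_apply_eq_zero_iff]
  · rw [ConcreteCategory.comp_apply, ModuleCat.eqToHom_apply_eq_zero_iff]
    exact Submodule.Quotient.mk_eq_zero _

theorem ker_π (n : ℕ) : LinearMap.ker (T.π n).hom = T.C n :=
  Submodule.ext fun _ => T.π_eq_zero_iff

noncomputable def d (n : ℕ) : T.obj (n + 1) ⟶ T.obj n :=
  if hn : n ≤ i then
    ModuleCat.ofHom ((T.π (n + 1)).hom.liftOfSurjective (T.π_surjective _) (S.d n ≫ T.π n).hom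
      (by rw [T.ker_π]; exact fun m hm => T.π_eq_zero_iff.mpr (T.d_mem n hn m hm)))
  else 0

theorem d_π {n : ℕ} (hn : n ≤ i) (m : S.X (n + 1)) :
    T.d n (T.π (n + 1) m) = T.π n (S.d n m) := by
  rw [show T.d n = _ from dif_pos hn]
  exact LinearMap.liftOfSurjective_apply _ _ _ _ m

theorem d_of_lt {n : ℕ} (hn : i < n) : T.d n = 0 := dif_neg (by omega)

noncomputable def gr (n : ℕ) (k : ℤ) : AddSubgroup (T.obj n) :=
  (S.gr n k).map (LinearMap.toAddMonoidHom (T.π n).hom)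

noncomputable def quotient : GradedSeq A 𝒜 i where
  X := T.obj
  d := T.d
  gr := T.gr
  internal n := (S.internal n).addSubgroup_map _ (T.π_surjective n) fun m hm k =>
    T.π_eq_zero_iff.mpr (T.proj_mem n k m (T.π_eq_zero_iff.mp hm))
  compat := by
    rintro n j k a _ ha ⟨m, hm, rfl⟩
    exact ⟨a • m, S.compat n j k a m ha hm, (T.π n).hom.map_smul a m⟩
  dgr := by
    rintro n k _ ⟨m, hm, rfl⟩
    by_cases hn : n ≤ i
    · exact ⟨S.d n m, S.dgr n k m hm, (T.d_π hn m).symm⟩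
    · rw [T.d_of_lt (by omega)]
      exact zero_mem _
  fg n := by
    have := S.fg n
    exact Module.Finite.of_surjective (T.π n).hom (T.π_surjective n)
  inj := by
    rw [injective_iff_map_eq_zero]
    intro x hx
    obtain ⟨m, rfl⟩ := T.π_surjective (i + 1) x
    rw [T.d_π le_rfl, T.π_eq_zero_iff] at hx
    rw [T.eq_zero_of_d_mem m hx, map_zero]
  surj x := by
    obtain ⟨m, rfl⟩ := T.π_surjective 0 x
    obtain ⟨y, rfl⟩ := S.surj m
    exact ⟨T.π 1 y, T.d_π (Nat.zero_le i) y⟩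
  exact n hn x := by
    obtain ⟨m, rfl⟩ := T.π_surjective (n + 1) x
    rw [T.d_π hn.le, T.π_eq_zero_iff]
    constructor
    · intro hm
      obtain ⟨_, ⟨z, rfl⟩, c, hc, rfl⟩ := Submodule.mem_sup.mp (T.mem_sup_of_d_mem n hn m hm)
      exact ⟨T.π (n + 2) z, by rw [T.d_π hn, map_add, T.π_eq_zero_iff.mpr hc, add_zero]⟩
    · rintro ⟨y, hy⟩
      obtain ⟨z, rfl⟩ := T.π_surjective (n + 2) y
      rw [T.d_π hn] at hy
      have hc : m - S.d (n + 1) z ∈ T.C (n + 1) :=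
        T.π_eq_zero_iff.mp (by rw [map_sub, hy, sub_self])
      simpa [(S.exact n hn).apply_apply_eq_zero] using T.d_mem n hn.le _ hc

theorem isGradedIdentity_π {n : ℕ} (hn : n = 0 ∨ n = i + 1) :
    ModuleCat.IsGradedIdentity (T.π n) (S.gr n) (T.gr n) :=
  ⟨(T.obj_of_end hn).symm, T.π_of_end hn, fun k => by rw [gr, T.π_of_end hn]⟩

theorem isFD_quotient (hS : S.IsFD) : T.quotient.IsFD := fun n =>
  have : Module.Finite ℂ (RestrictScalars ℂ A (S.X n)) := hS n
  ModuleCat.finite_restrictScalars_of_surjective (T.π n) (T.π_surjective n)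

end Quotient

theorem mor_quotient {U V : GradedSeq A 𝒜 i} (h : U.Mor V) (TU : Truncation U)
    (TV : Truncation V) (hC : ∀ φ : ∀ n, U.X n ⟶ V.X n,
      (∀ (n : ℕ) (k : ℤ) (m : U.X n), m ∈ U.gr n k → φ n m ∈ V.gr n k) →
      ∀ n, ∀ m ∈ TU.C n, φ n m ∈ TV.C n) :
    TU.quotient.Mor TV.quotient := by
  obtain ⟨φ, hsq, hgr, hend⟩ := mor_iff.mp h
  have hker (n : ℕ) : LinearMap.ker (TU.π n).hom ≤ LinearMap.ker (φ n ≫ TV.π n).hom := by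
    rw [TU.ker_π]
    exact fun m hm => TV.π_eq_zero_iff.mpr (hC φ hgr n m hm)
  let ψ (n : ℕ) : TU.obj n ⟶ TV.obj n :=
    ModuleCat.ofHom ((TU.π n).hom.liftOfSurjective (TU.π_surjective n) _ (hker n))
  have hψ (n : ℕ) (m : U.X n) : ψ n (TU.π n m) = TV.π n (φ n m) :=
    LinearMap.liftOfSurjective_apply _ _ _ _ m
  refine mor_iff.mpr ⟨ψ, fun n => ?_, ?_, fun n hn => ?_⟩
  · ext x
    obtain ⟨m, rfl⟩ := TU.π_surjective (n + 1) x
    by_cases hn : n ≤ i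
    · change ψ n (TU.d n (TU.π (n + 1) m)) = TV.d n (ψ (n + 1) (TU.π (n + 1) m))
      rw [TU.d_π hn, hψ, hψ, TV.d_π hn, ← ConcreteCategory.comp_apply (U.d n), hsq,
        ConcreteCategory.comp_apply]
    · change ψ n (TU.d n _) = TV.d n _
      rw [TU.d_of_lt (by omega), TV.d_of_lt (by omega)]
      exact map_zero _
  · rintro n k _ ⟨m, hm, rfl⟩
    exact ⟨φ n m, hgr n k m hm, (hψ n m).symm⟩
  · exact (TU.isGradedIdentity_π hn).of_comp_eq_comp (hend n hn) (TV.isGradedIdentity_π hn)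
      (by ext m; exact hψ n m)

/-- Discards only the terms beyond `i + 1`; unlike `S` itself, `(bot S).quotient` maps to the
quotient by any other truncation. -/
def bot (S : GradedSeq A 𝒜 i) : Truncation S where
  C n := if n ≤ i + 1 then ⊥ else ⊤
  C_of_end n hn := if_pos (by omega)
  C_of_le n hn := if_neg (by omega)
  proj_mem n k m hm := by
    split_ifs at hm ⊢
    · rw [(Submodule.mem_bot A).mp hm, map_zero]
      exact zero_mem _
    · trivial
  d_mem n hn m hm := by
    rw [if_pos (by omega), Submodule.mem_bot] at hm ⊢
    rw [hm, map_zero]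
  eq_zero_of_d_mem m hm := by
    rw [if_pos (by omega), Submodule.mem_bot] at hm
    exact S.inj (by rw [hm, map_zero])
  mem_sup_of_d_mem n hn m hm := by
    rw [if_pos (by omega), Submodule.mem_bot] at hm
    exact Submodule.mem_sup_left ((S.exact n hn m).mp hm)

theorem bot_C_of_le {S : GradedSeq A 𝒜 i} {n : ℕ} (hn : n ≤ i + 1) : (bot S).C n = ⊥ :=
  if_pos hn

theorem map_mem_of_mem_bot_C {S V : GradedSeq A 𝒜 i} (T : Truncation V)
    (φ : ∀ n, S.X n ⟶ V.X n) {n : ℕ} {m : S.X n} (hm : m ∈ (bot S).C n) : φ n m ∈ T.C n := by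
  by_cases hn : n ≤ i + 1
  · rw [bot_C_of_le hn, Submodule.mem_bot] at hm
    rw [hm, map_zero]
    exact zero_mem _
  · rw [T.C_of_le n (by omega)]
    trivial

theorem bot_quotient_mor (S : GradedSeq A 𝒜 i) : (bot S).quotient.Mor S := by
  have hbij {n : ℕ} (hn : n ≤ i + 1) : Function.Bijective ((bot S).π n) :=
    ⟨(injective_iff_map_eq_zero _).mpr fun m hm => by
      rwa [π_eq_zero_iff, bot_C_of_le hn, Submodule.mem_bot] at hm, π_surjective _ n⟩
  let φ (n : ℕ) : (bot S).obj n ⟶ S.X n := if hn : n ≤ i + 1 then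
    ModuleCat.ofHom (LinearEquiv.ofBijective ((bot S).π n).hom (hbij hn)).symm.toLinearMap else 0
  have hφ {n : ℕ} (hn : n ≤ i + 1) (m : S.X n) : φ n ((bot S).π n m) = m := by
    rw [show φ n = _ from dif_pos hn]
    exact (LinearEquiv.ofBijective _ (hbij hn)).symm_apply_apply m
  have hφ_of_lt {n : ℕ} (hn : i + 1 < n) : φ n = 0 := dif_neg (by omega)
  refine mor_iff.mpr ⟨φ, fun n => ?_, ?_, fun n hn => ?_⟩
  · ext x
    by_cases hn : n ≤ i
    · obtain ⟨m, rfl⟩ := π_surjective _ (n + 1) x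
      change φ n ((bot S).d n _) = S.d n (φ (n + 1) _)
      rw [d_π _ hn, hφ (by omega), hφ (by omega)]
    · change φ n ((bot S).d n x) = S.d n (φ (n + 1) x)
      rw [d_of_lt _ (by omega), hφ_of_lt (n := n + 1) (by omega)]
      change φ n 0 = S.d n 0
      rw [map_zero, map_zero]
  · rintro n k _ ⟨m, hm, rfl⟩
    change φ n ((bot S).π n m) ∈ S.gr n k
    by_cases hn : n ≤ i + 1
    · rwa [hφ hn]
    · rw [hφ_of_lt (by omega)]
      exact zero_mem _
  · exact ((bot S).isGradedIdentity_π hn).of_comp_eq_comp (ModuleCat.isGradedIdentity_id _)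
      (ModuleCat.isGradedIdentity_id _) (by ext m; exact hφ (by omega) m)

variable [GradedAlgebra 𝒜] (hnonneg : ∀ n : ℤ, n < 0 → 𝒜 n = ⊥)

def degreeGT (S : GradedSeq A 𝒜 i) (N : ℤ) (h0 : ∀ k, N < k → ∀ m ∈ S.gr 0 k, m = 0)
    (htop : ∀ k, N < k → ∀ m ∈ S.gr (i + 1) k, m = 0) : Truncation S where
  C n := if n ≤ i + 1 then (S.internal n).degreeGT hnonneg N else ⊤
  C_of_end n hn := by
    rw [if_pos (by omega)]
    rcases hn with rfl | rfl
    exacts [(S.internal 0).degreeGT_eq_bot hnonneg h0, (S.internal _).degreeGT_eq_bot hnonneg htop]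
  C_of_le n hn := if_neg (by omega)
  proj_mem n k m hm := by
    split_ifs at hm ⊢
    exacts [(S.internal n).proj_mem_degreeGT hnonneg hm k, trivial]
  d_mem n hn m hm := by
    rw [if_pos (by omega)] at hm ⊢
    exact (S.internal (n + 1)).map_mem_degreeGT hnonneg (S.internal n) (S.d n).hom (S.dgr n) hm
  eq_zero_of_d_mem m hm := by
    rw [if_pos (by omega)] at hm
    have hm' : m ∈ (S.internal (i + 1)).degreeGT hnonneg N := fun k hk =>
      S.inj (by rw [← S.proj_d, hm k hk, map_zero])
    rwa [(S.internal (i + 1)).degreeGT_eq_bot hnonneg htop] at hm'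
  mem_sup_of_d_mem n hn m hm := by
    rw [if_pos (by omega)] at hm ⊢
    -- the part `m'` of `m` in degrees `≤ N` is a cycle
    obtain ⟨m', hmm', hm'⟩ := (S.internal (n + 1)).exists_sub_mem_degreeGT hnonneg N m
    have hdm' : S.d n m' = 0 := (S.internal n).eq_zero_of_forall_proj_eq_zero fun k => by
      rw [S.proj_d]
      by_cases hk : k ≤ N
      · rw [← sub_sub_cancel m m', map_sub, hmm' k hk, sub_zero, ← S.proj_d, hm k hk]
      · rw [hm' k (not_le.mp hk), map_zero]
    rw [← add_sub_cancel m' m]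
    exact Submodule.add_mem_sup ((S.exact n hn m').mp hdm') hmm'

theorem degreeGT_C {S : GradedSeq A 𝒜 i} {N : ℤ} {h0 htop} {n : ℕ} (hn : n ≤ i + 1) :
    (degreeGT hnonneg S N h0 htop).C n = (S.internal n).degreeGT hnonneg N := if_pos hn

theorem isFD_degreeGT_quotient [IsNoetherianRing A] (hfd0 : FiniteDimensional ℂ (𝒜 0))
    (S : GradedSeq A 𝒜 i) (N : ℤ) (h0 htop) : (degreeGT hnonneg S N h0 htop).quotient.IsFD := by
  intro n
  set T := degreeGT hnonneg S N h0 htop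
  let _ := Module.restrictScalars ℂ A (S.X n)
  let _ := Module.restrictScalars ℂ A (T.obj n)
  have := IsScalarTower.restrictScalars ℂ A (S.X n)
  have := IsScalarTower.restrictScalars ℂ A (T.obj n)
  have := S.fg n
  change FiniteDimensional ℂ (T.obj n)
  refine (S.internal n).finiteDimensional_of_surjective_of_map_eq_zero hnonneg hfd0 (T.π n).hom
    (T.π_surjective n) (N := N) fun k hk m hm => T.π_eq_zero_iff.mpr ?_
  by_cases hn : n ≤ i + 1
  · rw [degreeGT_C hnonneg hn]
    exact (S.internal n).mem_degreeGT_of_mem hnonneg hm hk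
  · rw [T.C_of_le n (by omega)]
    trivial

end Truncation

def EndsBoundedBy (N : ℤ) (S : GradedSeq A 𝒜 i) : Prop :=
  (∀ k, N < k → ∀ m ∈ S.gr 0 k, m = 0) ∧ ∀ k, N < k → ∀ m ∈ S.gr (i + 1) k, m = 0

theorem Mor.endsBoundedBy_iff {S T : GradedSeq A 𝒜 i} (h : S.Mor T) (N : ℤ) :
    S.EndsBoundedBy N ↔ T.EndsBoundedBy N := by
  obtain ⟨_, -, -, hend⟩ := mor_iff.mp h
  exact and_congr ((hend 0 (Or.inl rfl)).bounded_iff N)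
    ((hend (i + 1) (Or.inr rfl)).bounded_iff N)

theorem exists_endsBoundedBy [GradedAlgebra 𝒜] (S : GradedSeq A 𝒜 i)
    (h0 : Module.Finite ℂ (RestrictScalars ℂ A (S.X 0)))
    (htop : Module.Finite ℂ (RestrictScalars ℂ A (S.X (i + 1)))) : ∃ N, S.EndsBoundedBy N := by
  obtain ⟨N₀, hN₀⟩ := S.exists_forall_lt_mem_eq_zero 0
  obtain ⟨N₁, hN₁⟩ := S.exists_forall_lt_mem_eq_zero (i + 1)
  exact ⟨max N₀ N₁, fun k hk => hN₀ k (by omega), fun k hk => hN₁ k (by omega)⟩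

def MorFD (S T : GradedSeq A 𝒜 i) : Prop := S.Mor T ∧ S.IsFD ∧ T.IsFD

variable [GradedAlgebra 𝒜] (hnonneg : ∀ n : ℤ, n < 0 → 𝒜 n = ⊥)

noncomputable def truncate (S : GradedSeq A 𝒜 i) {N : ℤ} (hS : S.EndsBoundedBy N) :
    GradedSeq A 𝒜 i :=
  (Truncation.degreeGT hnonneg S N hS.1 hS.2).quotient

theorem bot_quotient_mor_truncate (S : GradedSeq A 𝒜 i) {N : ℤ} (hS : S.EndsBoundedBy N) :
    (Truncation.bot S).quotient.Mor (S.truncate hnonneg hS) :=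
  Truncation.mor_quotient S.mor_refl _ _ fun φ _ _ _ hm => Truncation.map_mem_of_mem_bot_C _ φ hm

theorem Mor.truncate {S T : GradedSeq A 𝒜 i} (h : S.Mor T) {N : ℤ} (hS : S.EndsBoundedBy N)
    (hT : T.EndsBoundedBy N) : (S.truncate hnonneg hS).Mor (T.truncate hnonneg hT) :=
  Truncation.mor_quotient h _ _ fun φ hφ n m hm => by
    by_cases hn : n ≤ i + 1
    · rw [Truncation.degreeGT_C hnonneg hn] at hm ⊢
      exact (S.internal n).map_mem_degreeGT hnonneg (T.internal n) (φ n).hom (hφ n) hm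
    · rw [Truncation.C_of_le _ n (by omega)]
      trivial

theorem eqvGen_truncate (S : GradedSeq A 𝒜 i) {N : ℤ} (hS : S.EndsBoundedBy N) :
    Relation.EqvGen Mor S (S.truncate hnonneg hS) :=
  (Relation.EqvGen.rel _ _ (Truncation.bot_quotient_mor S)).symm.trans _ _ _
    (Relation.EqvGen.rel _ _ (S.bot_quotient_mor_truncate hnonneg hS))

variable [IsNoetherianRing A] (hfd0 : FiniteDimensional ℂ (𝒜 0))
include hfd0

theorem isFD_truncate (S : GradedSeq A 𝒜 i) {N : ℤ} (hS : S.EndsBoundedBy N) :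
    (S.truncate hnonneg hS).IsFD :=
  Truncation.isFD_degreeGT_quotient hnonneg hfd0 S N _ _

theorem IsFD.eqvGen_morFD_truncate {S : GradedSeq A 𝒜 i} (hSfd : S.IsFD) {N : ℤ}
    (hS : S.EndsBoundedBy N) : Relation.EqvGen MorFD S (S.truncate hnonneg hS) :=
  have hbot := (Truncation.bot S).isFD_quotient hSfd
  (Relation.EqvGen.rel _ _ ⟨Truncation.bot_quotient_mor S, hbot, hSfd⟩).symm.trans _ _ _
    (Relation.EqvGen.rel _ _ ⟨S.bot_quotient_mor_truncate hnonneg hS, hbot,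
      S.isFD_truncate hnonneg hfd0 hS⟩)

theorem eqvGen_morFD_truncate_of_eqvGen {S T : GradedSeq A 𝒜 i} (h : Relation.EqvGen Mor S T)
    (N : ℤ) : (S.EndsBoundedBy N ↔ T.EndsBoundedBy N) ∧
      ∀ (hS : S.EndsBoundedBy N) (hT : T.EndsBoundedBy N),
        Relation.EqvGen MorFD (S.truncate hnonneg hS) (T.truncate hnonneg hT) := by
  induction h with
  | rel S T h =>
    exact ⟨h.endsBoundedBy_iff N, fun hS hT => .rel _ _ ⟨h.truncate hnonneg hS hT,
      S.isFD_truncate hnonneg hfd0 hS, T.isFD_truncate hnonneg hfd0 hT⟩⟩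
  | refl S => exact ⟨Iff.rfl, fun _ _ => .refl _⟩
  | symm S T _ ih => exact ⟨ih.1.symm, fun hS hT => (ih.2 hT hS).symm⟩
  | trans S T U _ _ ih₁ ih₂ =>
    exact ⟨ih₁.1.trans ih₂.1, fun hS hU =>
      (ih₁.2 hS (ih₁.1.mp hS)).trans _ _ _ (ih₂.2 (ih₁.1.mp hS) hU)⟩

end GradedSeq

/-- By dévissage [BBD, Prop. 3.1.16], full faithfulness amounts to bijectivity of the maps of
Yoneda Ext groups `Ext^i_{R-gmod_fd}(A*, B) → Ext^i_{R-gmod}(A*, B)` for finite-dimensional `A*`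
and `B`, which is what is stated here. -/
theorem derived_fd_to_gmod_fullyFaithful_general
    (A : Type) [Ring A] [Algebra ℂ A] [IsNoetherianRing A]
    (𝒜 : ℤ → Submodule ℂ A) [GradedAlgebra 𝒜]
    (hnonneg : ∀ n : ℤ, n < 0 → 𝒜 n = ⊥)
    (hfd0 : FiniteDimensional ℂ (𝒜 0))
    (i : ℕ) :
    -- surjectivity of Ext^i_fd(A*,B) → Ext^i(A*,B)
    (∀ S : GradedSeq A 𝒜 i,
      @FiniteDimensional ℂ (RestrictScalars ℂ A (S.X 0)) _ _ (RestrictScalars.module ℂ A (S.X 0)) →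
      @FiniteDimensional ℂ (RestrictScalars ℂ A (S.X (i + 1))) _ _
        (RestrictScalars.module ℂ A (S.X (i + 1))) →
      ∃ T : GradedSeq A 𝒜 i, T.IsFD ∧ Relation.EqvGen GradedSeq.Mor S T) ∧
    -- injectivity: equivalence in R-gmod implies equivalence within R-gmod_fd
    (∀ S T : GradedSeq A 𝒜 i, S.IsFD → T.IsFD →
      Relation.EqvGen GradedSeq.Mor S T →
      Relation.EqvGen (fun S' T' : GradedSeq A 𝒜 i =>
        GradedSeq.Mor S' T' ∧ S'.IsFD ∧ T'.IsFD) S T) := by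
  refine ⟨fun S h0 htop => ?_, fun S T hS hT h => ?_⟩
  · obtain ⟨N, hN⟩ := S.exists_endsBoundedBy h0 htop
    exact ⟨_, S.isFD_truncate hnonneg hfd0 hN, S.eqvGen_truncate hnonneg hN⟩
  · obtain ⟨N, hN⟩ := S.exists_endsBoundedBy (hS 0) (hS (i + 1))
    obtain ⟨hiff, htrunc⟩ := GradedSeq.eqvGen_morFD_truncate_of_eqvGen hnonneg hfd0 h N
    have hNT := hiff.mp hN
    exact (hS.eqvGen_morFD_truncate hnonneg hfd0 hN).trans _ _ _
      ((htrunc hN hNT).trans _ _ _ (hT.eqvGen_morFD_truncate hnonneg hfd0 hNT).symm)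

/-- Lemma 2.1 of the paper: the natural functor
`D^b(R-gmod_fd) → D^b(R-gmod)` is fully faithful.  By the standard dévissage
[BBD, Prop. 3.1.16] this amounts to the statement that for finite-dimensional graded
modules `A*` and `B`, the natural map of Yoneda Ext groups
`Ext^i_{R-gmod_fd}(A*,B) → Ext^i_{R-gmod}(A*,B)` is bijective for all `i ≥ 1`:
every extension class of `A*` by `B` contains a finite-dimensional representative, and
two finite-dimensional extensions equivalent in `R-gmod` are already equivalent
in `R-gmod_fd`. -/
theorem derived_fd_to_gmod_fullyFaithful
    (A : Type) [Ring A] [Algebra ℂ A] [IsNoetherianRing A]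
    (𝒜 : ℤ → Submodule ℂ A) [GradedAlgebra 𝒜]
    (hnonneg : ∀ n : ℤ, n < 0 → 𝒜 n = ⊥)
    (hfd0 : FiniteDimensional ℂ (𝒜 0))
    (i : ℕ) (hi : 1 ≤ i) :
    -- surjectivity of Ext^i_fd(A*,B) → Ext^i(A*,B)
    (∀ S : GradedSeq A 𝒜 i,
      @FiniteDimensional ℂ (RestrictScalars ℂ A (S.X 0)) _ _ (RestrictScalars.module ℂ A (S.X 0)) →
      @FiniteDimensional ℂ (RestrictScalars ℂ A (S.X (i + 1))) _ _
        (RestrictScalars.module ℂ A (S.X (i + 1))) →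
      ∃ T : GradedSeq A 𝒜 i, T.IsFD ∧ Relation.EqvGen GradedSeq.Mor S T) ∧
    -- injectivity: equivalence in R-gmod implies equivalence within R-gmod_fd
    (∀ S T : GradedSeq A 𝒜 i, S.IsFD → T.IsFD →
      Relation.EqvGen GradedSeq.Mor S T →
      Relation.EqvGen (fun S' T' : GradedSeq A 𝒜 i =>
        GradedSeq.Mor S' T' ∧ S'.IsFD ∧ T'.IsFD) S T) :=
  derived_fd_to_gmod_fullyFaithful_general A 𝒜 hnonneg hfd0 i
end

section
/- Let (𝒜, ℬ) be an admissible pair in a triangulated category 𝒟, i.e., Hom(A,B) = 0 for all A ∈ 𝒜, B ∈ ℬ, and 𝒜 together with ℬ generate 𝒟 as a triangulated category. Then the inclusion 𝒜 → 𝒟 admits a right adjoint ι and the inclusion ℬ → 𝒟 admits a left adjoint ȷ, and for every X ∈ 𝒟 there is a distinguished triangle ι(X) → X → ȷ(X) →. -/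
/-!
Write `𝒜^⊥` for the objects receiving no nonzero map from `𝒜`. In a distinguished triangle
`A ⟶ X ⟶ B ⟶ A⟦1⟧` with `A ∈ 𝒜` and `B ∈ ℬ ⊆ 𝒜^⊥`, composition with `A ⟶ X` is bijective on maps
out of objects of `𝒜`, and composition with `X ⟶ B` is bijective on maps into objects of `𝒜^⊥`;
these bijections are the hom-bijections of the two adjunctions. So everything reduces to showing
that the objects admitting such a triangle form a triangulated subcategory, which then contains
all objects by generation, and the only point is closure under extensions, to be proved without
the octahedral axiom.

Given `X₁ ⟶ X₂ ⟶ X₃ ⟶` with such triangles for `X₁` and `X₃`, extend the `𝒜`-parts to a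
distinguished triangle `A₁ ⟶ A₂ ⟶ A₃ ⟶` mapping to it and the `ℬ`-parts to one `B₁ ⟶ B₂ ⟶ B₃ ⟶`
receiving a map from it. The five lemma for the functors `Hom(W, -)` with `W ∈ 𝒜` and `Hom(-, W)`
with `W ∈ 𝒜^⊥` shows that `A₂ ⟶ X₂` and `X₂ ⟶ B₂` have the same bijectivity properties. The cone
`Z` of `A₂ ⟶ X₂` then lies in `𝒜^⊥`, and `X₂ ⟶ Z` and `X₂ ⟶ B₂` are two reflections of `X₂`
into `𝒜^⊥`, so `Z ≅ B₂ ∈ ℬ`.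
-/

open CategoryTheory CategoryTheory.Triangulated CategoryTheory.Pretriangulated
  CategoryTheory.Limits

namespace CategoryTheory.Triangulated

/-- The structure `Triangulated.Subcategory` of the older Mathlib (removed since), restated. -/
structure Subcategory (C : Type*) [Category C] [HasZeroObject C] [HasShift C ℤ]
    [Preadditive C] [∀ (n : ℤ), (shiftFunctor C n).Additive] [Pretriangulated C] where
  P : C → Prop
  zero' : ∃ (Z : C) (_ : IsZero Z), P Z
  shift (X : C) (n : ℤ) : P X → P (X⟦n⟧)
  ext₂' (T : Triangle C) (_ : T ∈ distTriang C) : P T.obj₁ → P T.obj₃ →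
    ObjectProperty.isoClosure P T.obj₂

end CategoryTheory.Triangulated

namespace CategoryTheory.ObjectProperty

section ZeroMorphisms

variable {C : Type*} [Category C] [HasZeroMorphisms C] {P : ObjectProperty C}

lemma le_leftOrthogonal_rightOrthogonal : P ≤ P.rightOrthogonal.leftOrthogonal :=
  fun _ hX _ f hY ↦ hY f hX

lemma isColocal.eq_zero_of_comp_eq_zero {Y Z : C} {f : Y ⟶ Z} (hf : P.isColocal f) {W : C}
    (hW : P W) {g : W ⟶ Y} (hg : g ≫ f = 0) : g = 0 :=
  (hf W hW).1 (by simp only [hg, Limits.zero_comp])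

lemma isLocal.eq_zero_of_comp_eq_zero {Y Z : C} {f : Y ⟶ Z} (hf : P.isLocal f) {W : C}
    (hW : P W) {g : Z ⟶ W} (hg : f ≫ g = 0) : g = 0 :=
  (hf W hW).1 (by simp only [hg, Limits.comp_zero])

end ZeroMorphisms

section Shift

variable {C : Type*} [Category C] [HasShift C ℤ] {P : ObjectProperty C}

lemma isColocal_shift_map [P.IsStableUnderShift ℤ] {X Y : C} {f : X ⟶ Y}
    (hf : P.isColocal f) (n : ℤ) : P.isColocal (f⟦n⟧') := by
  intro W hW
  let e := (shiftEquiv C n).symm.toAdjunction.homEquiv W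
  have : (fun g : W ⟶ X⟦n⟧ ↦ g ≫ f⟦n⟧') = e Y ∘ (fun g ↦ g ≫ f) ∘ (e X).symm := by
    funext g
    exact (((shiftEquiv C n).symm.toAdjunction.homEquiv_naturality_right _ f).trans
      (congrArg (· ≫ f⟦n⟧') ((e X).apply_symm_apply g))).symm
  rw [this]
  exact (e Y).bijective.comp ((hf _ (P.le_shift (-n) _ hW)).comp (e X).symm.bijective)

lemma isLocal_shift_map [P.IsStableUnderShift ℤ] {X Y : C} {f : X ⟶ Y}
    (hf : P.isLocal f) (n : ℤ) : P.isLocal (f⟦n⟧') := by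
  intro W hW
  let e := fun Z ↦ (shiftEquiv C n).toAdjunction.homEquiv Z W
  have : (fun g : Y⟦n⟧ ⟶ W ↦ f⟦n⟧' ≫ g) = (e X).symm ∘ (fun g ↦ f ≫ g) ∘ e Y := by
    funext g
    exact (((shiftEquiv C n).toAdjunction.homEquiv_naturality_left_symm f _).trans
      (congrArg (f⟦n⟧' ≫ ·) ((e Y).symm_apply_apply g))).symm
  rw [this]
  exact (e X).symm.bijective.comp ((hf _ (P.le_shift (-n) _ hW)).comp (e Y).bijective)

end Shift

section Pretriangulated

variable {C : Type*} [Category C] [HasZeroObject C] [HasShift C ℤ] [Preadditive C]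
  [∀ n : ℤ, (shiftFunctor C n).Additive] [Pretriangulated C] {P Q : ObjectProperty C}

lemma isColocal_mor₁_of_distTriang [P.IsStableUnderShift ℤ] {T : Triangle C}
    (hT : T ∈ distTriang C) (h₃ : P.rightOrthogonal T.obj₃) : P.isColocal T.mor₁ := by
  intro W hW
  refine ⟨(injective_iff_map_eq_zero (Preadditive.rightComp W T.mor₁)).2 fun x hx ↦ ?_,
    fun y ↦ ?_⟩
  · obtain ⟨z, rfl⟩ := Triangle.coyoneda_exact₂ _ (inv_rot_of_distTriang _ hT) x hx
    rw [P.rightOrthogonal.le_shift (-1) _ h₃ z hW]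
    exact Limits.zero_comp
  · obtain ⟨z, rfl⟩ := Triangle.coyoneda_exact₂ _ hT y (h₃ _ hW)
    exact ⟨z, rfl⟩

lemma isLocal_mor₂_of_distTriang [P.IsStableUnderShift ℤ] {T : Triangle C}
    (hT : T ∈ distTriang C) (h₁ : P.leftOrthogonal T.obj₁) : P.isLocal T.mor₂ := by
  intro W hW
  refine ⟨(injective_iff_map_eq_zero (Preadditive.leftComp W T.mor₂)).2 fun x hx ↦ ?_,
    fun y ↦ ?_⟩
  · obtain ⟨z, rfl⟩ := Triangle.yoneda_exact₃ _ hT x hx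
    rw [P.leftOrthogonal.le_shift 1 _ h₁ z hW]
    exact Limits.comp_zero
  · obtain ⟨z, rfl⟩ := Triangle.yoneda_exact₂ _ hT y (h₁ _ hW)
    exact ⟨z, rfl⟩

lemma rightOrthogonal_obj₃_of_isColocal [P.IsStableUnderShift ℤ] {T : Triangle C}
    (hT : T ∈ distTriang C) (h : P.isColocal T.mor₁) : P.rightOrthogonal T.obj₃ := by
  intro W y hW
  have hy : y ≫ T.mor₃ = 0 := (isColocal_shift_map h 1).eq_zero_of_comp_eq_zero hW
    (by rw [Category.assoc, comp_distTriang_mor_zero₃₁ _ hT, Limits.comp_zero])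
  obtain ⟨z, rfl⟩ := Triangle.coyoneda_exact₃ _ hT y hy
  obtain ⟨x, rfl⟩ := (h _ hW).2 z
  rw [Category.assoc, comp_distTriang_mor_zero₁₂ _ hT, Limits.comp_zero]

lemma isColocal_hom₂_of_hom₁_hom₃ [P.IsStableUnderShift ℤ] {T T' : Triangle C} (φ : T ⟶ T')
    (hT : T ∈ distTriang C) (hT' : T' ∈ distTriang C)
    (h₁ : P.isColocal φ.hom₁) (h₃ : P.isColocal φ.hom₃) : P.isColocal φ.hom₂ := by
  intro W hW
  refine ⟨(injective_iff_map_eq_zero (Preadditive.rightComp W φ.hom₂)).2 fun x hx ↦ ?_,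
    fun y ↦ ?_⟩
  · change x ≫ φ.hom₂ = 0 at hx
    obtain ⟨y, rfl⟩ := Triangle.coyoneda_exact₂ _ hT x (h₃.eq_zero_of_comp_eq_zero hW
      (by rw [Category.assoc, φ.comm₂, ← Category.assoc, hx, Limits.zero_comp]))
    obtain ⟨z', hz'⟩ := Triangle.coyoneda_exact₂ _ (inv_rot_of_distTriang _ hT') (y ≫ φ.hom₁)
      (by
        change (y ≫ φ.hom₁) ≫ T'.mor₁ = 0
        rw [Category.assoc, ← φ.comm₁, ← Category.assoc, hx])
    obtain ⟨z, hz⟩ : ∃ z : W ⟶ T.invRotate.obj₁, z ≫ ((invRotate C).map φ).hom₁ = z' :=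
      (isColocal_shift_map h₃ (-1) W hW).2 z'
    -- `T.invRotate.obj₂` is `T.obj₁` only up to unfolding, which `rw` cannot see through
    obtain rfl : y = z ≫ T.invRotate.mor₁ := (h₁ W hW).1 (hz'.trans (by
      rw [← hz]
      exact (Category.assoc _ _ _).trans
        ((congrArg (z ≫ ·) ((invRotate C).map φ).comm₁.symm).trans (Category.assoc _ _ _).symm)))
    exact (Category.assoc _ _ _).trans ((congrArg (z ≫ ·)
      (comp_distTriang_mor_zero₁₂ _ (inv_rot_of_distTriang _ hT))).trans Limits.comp_zero)
  · obtain ⟨x₃, hx₃⟩ := (h₃ W hW).2 (y ≫ T'.mor₂)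
    obtain ⟨x₂, rfl⟩ := Triangle.coyoneda_exact₃ _ hT x₃
      ((isColocal_shift_map h₁ 1).eq_zero_of_comp_eq_zero hW (by
        dsimp only at hx₃
        rw [Category.assoc, φ.comm₃, ← Category.assoc, hx₃, Category.assoc,
          comp_distTriang_mor_zero₂₃ _ hT', Limits.comp_zero]))
    obtain ⟨y₁, hy₁⟩ := Triangle.coyoneda_exact₂ _ hT' (y - x₂ ≫ φ.hom₂) (by
      dsimp only at hx₃
      rw [Preadditive.sub_comp, Category.assoc, ← φ.comm₂, ← hx₃, Category.assoc, sub_self])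
    obtain ⟨x₁, rfl⟩ := (h₁ W hW).2 y₁
    refine ⟨x₂ + x₁ ≫ T.mor₁, ?_⟩
    dsimp only
    rw [Preadditive.add_comp, Category.assoc, φ.comm₁, ← Category.assoc, ← hy₁,
      add_sub_cancel]

lemma isLocal_hom₂_of_hom₁_hom₃ [P.IsStableUnderShift ℤ] {T T' : Triangle C} (φ : T ⟶ T')
    (hT : T ∈ distTriang C) (hT' : T' ∈ distTriang C)
    (h₁ : P.isLocal φ.hom₁) (h₃ : P.isLocal φ.hom₃) : P.isLocal φ.hom₂ := by
  intro W hW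
  refine ⟨(injective_iff_map_eq_zero (Preadditive.leftComp W φ.hom₂)).2 fun x hx ↦ ?_,
    fun y ↦ ?_⟩
  · change φ.hom₂ ≫ x = 0 at hx
    obtain ⟨x₃, rfl⟩ := Triangle.yoneda_exact₂ _ hT' x (h₁.eq_zero_of_comp_eq_zero hW
      (by rw [← Category.assoc, ← φ.comm₁, Category.assoc, hx, Limits.comp_zero]))
    obtain ⟨k, hk⟩ := Triangle.yoneda_exact₃ _ hT (φ.hom₃ ≫ x₃)
      (by rw [← Category.assoc, φ.comm₂, Category.assoc, hx])
    obtain ⟨k', rfl⟩ := (isLocal_shift_map h₁ 1 W hW).2 k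
    obtain rfl : x₃ = T'.mor₃ ≫ k' := (h₃ W hW).1 (by
      dsimp only at hk ⊢
      rw [hk, ← Category.assoc, φ.comm₃, Category.assoc])
    rw [← Category.assoc, comp_distTriang_mor_zero₂₃ _ hT', Limits.zero_comp]
  · obtain ⟨y₁, hy₁⟩ := (h₁ W hW).2 (T.mor₁ ≫ y)
    dsimp only at hy₁
    obtain ⟨y₂, rfl⟩ : ∃ y₂ : T'.obj₂ ⟶ W, y₁ = T'.mor₁ ≫ y₂ :=
      Triangle.yoneda_exact₂ _ (inv_rot_of_distTriang _ hT') y₁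
        ((isLocal_shift_map h₃ (-1)).eq_zero_of_comp_eq_zero hW (by
          have hcomm : φ.hom₃⟦-1⟧' ≫ T'.invRotate.mor₁ = T.invRotate.mor₁ ≫ φ.hom₁ :=
            ((invRotate C).map φ).comm₁.symm
          have hzero : T.invRotate.mor₁ ≫ T.mor₁ = 0 :=
            comp_distTriang_mor_zero₁₂ _ (inv_rot_of_distTriang _ hT)
          refine (Category.assoc _ _ _).symm.trans ?_
          rw [hcomm]
          refine ((Category.assoc _ _ _).trans (congrArg (T.invRotate.mor₁ ≫ ·) hy₁)).trans ?_
          refine (Category.assoc _ _ _).symm.trans ?_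
          rw [hzero]
          exact Limits.zero_comp))
    obtain ⟨y₃, hy₃⟩ := Triangle.yoneda_exact₂ _ hT (y - φ.hom₂ ≫ y₂) (by
      rw [Preadditive.comp_sub, ← Category.assoc, φ.comm₁, Category.assoc, hy₁, sub_self])
    obtain ⟨y₄, rfl⟩ := (h₃ W hW).2 y₃
    refine ⟨y₂ + T'.mor₂ ≫ y₄, ?_⟩
    dsimp only at hy₃ ⊢
    rw [Preadditive.comp_add, ← Category.assoc, ← φ.comm₂, Category.assoc, ← hy₃,
      add_sub_cancel]

lemma exists_distTriang_hom_to_of_isColocal [P.IsTriangulated] {T : Triangle C}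
    (hT : T ∈ distTriang C) {A₁ A₃ : C} (hA₁ : P A₁) (hA₃ : P A₃) {a₁ : A₁ ⟶ T.obj₁}
    (ha₁ : P.isColocal a₁) (a₃ : A₃ ⟶ T.obj₃) :
    ∃ (A₂ : C) (i : A₁ ⟶ A₂) (p : A₂ ⟶ A₃) (g : A₃ ⟶ A₁⟦(1 : ℤ)⟧) (φ : Triangle.mk i p g ⟶ T),
      Triangle.mk i p g ∈ distTriang C ∧ P A₂ ∧ φ.hom₁ = a₁ ∧ φ.hom₃ = a₃ := by
  obtain ⟨g, hg⟩ := (isColocal_shift_map ha₁ 1 A₃ hA₃).2 (a₃ ≫ T.mor₃)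
  obtain ⟨A₂, hA₂, i, p, hTA⟩ := P.distinguished_cocone_triangle₂ g hA₁ hA₃
  obtain ⟨a₂, h₁, h₂⟩ := complete_distinguished_triangle_morphism₂ _ _ hTA hT a₁ a₃ hg
  exact ⟨A₂, i, p, g, Triangle.homMk _ _ a₁ a₂ a₃ h₁ h₂ hg, hTA, hA₂, rfl, rfl⟩

lemma exists_distTriang_hom_from_of_isLocal [P.IsTriangulated] {T : Triangle C}
    (hT : T ∈ distTriang C) {B₁ B₃ : C} (hB₁ : P B₁) (hB₃ : P B₃) (b₁ : T.obj₁ ⟶ B₁)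
    {b₃ : T.obj₃ ⟶ B₃} (hb₃ : P.isLocal b₃) :
    ∃ (B₂ : C) (e : B₁ ⟶ B₂) (s : B₂ ⟶ B₃) (h : B₃ ⟶ B₁⟦(1 : ℤ)⟧) (ψ : T ⟶ Triangle.mk e s h),
      Triangle.mk e s h ∈ distTriang C ∧ P B₂ ∧ ψ.hom₁ = b₁ ∧ ψ.hom₃ = b₃ := by
  obtain ⟨h, hh⟩ := (hb₃ _ (P.le_shift 1 _ hB₁)).2 (T.mor₃ ≫ b₁⟦1⟧')
  obtain ⟨B₂, hB₂, e, s, hTB⟩ := P.distinguished_cocone_triangle₂ h hB₁ hB₃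
  obtain ⟨b₂, h₁, h₂⟩ := complete_distinguished_triangle_morphism₂ _ _ hT hTB b₁ b₃ hh.symm
  exact ⟨B₂, e, s, h, Triangle.homMk _ _ b₁ b₂ b₃ h₁ h₂ hh.symm, hTB, hB₂, rfl, rfl⟩

lemma extensionProduct_ext₂ [P.IsTriangulated] [Q.IsTriangulated]
    (hPQ : Q ≤ P.rightOrthogonal) (T : Triangle C) (hT : T ∈ distTriang C)
    (h₁ : P.extensionProduct Q T.obj₁) (h₃ : P.extensionProduct Q T.obj₃) :
    P.extensionProduct Q T.obj₂ := by
  obtain ⟨A₁, B₁, a₁, b₁, d₁, hT₁, hA₁, hB₁⟩ := h₁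
  obtain ⟨A₃, B₃, a₃, b₃, d₃, hT₃, hA₃, hB₃⟩ := h₃
  have ha₁ : P.isColocal a₁ := isColocal_mor₁_of_distTriang hT₁ (hPQ _ hB₁)
  have ha₃ : P.isColocal a₃ := isColocal_mor₁_of_distTriang hT₃ (hPQ _ hB₃)
  have hb₁ : P.rightOrthogonal.isLocal b₁ :=
    isLocal_mor₂_of_distTriang hT₁ (P.le_leftOrthogonal_rightOrthogonal _ hA₁)
  have hb₃ : P.rightOrthogonal.isLocal b₃ :=
    isLocal_mor₂_of_distTriang hT₃ (P.le_leftOrthogonal_rightOrthogonal _ hA₃)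
  obtain ⟨A₂, _, _, _, φ, hTA, hA₂, rfl, rfl⟩ :=
    exists_distTriang_hom_to_of_isColocal hT hA₁ hA₃ ha₁ a₃
  obtain ⟨B₂, _, _, _, ψ, hTB, hB₂, rfl, rfl⟩ :=
    exists_distTriang_hom_from_of_isLocal hT hB₁ hB₃ b₁ (fun W hW ↦ hb₃ W (hPQ W hW))
  have ha₂ : P.isColocal φ.hom₂ := isColocal_hom₂_of_hom₁_hom₃ φ hTA hT ha₁ ha₃
  have hb₂ : P.rightOrthogonal.isLocal ψ.hom₂ := isLocal_hom₂_of_hom₁_hom₃ ψ hT hTB hb₁ hb₃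
  obtain ⟨Z, q, r, hTZ⟩ := distinguished_cocone_triangle φ.hom₂
  have hZ : P.rightOrthogonal Z := rightOrthogonal_obj₃_of_isColocal hTZ ha₂
  have hq : P.rightOrthogonal.isLocal q :=
    isLocal_mor₂_of_distTriang hTZ (P.le_leftOrthogonal_rightOrthogonal _ hA₂)
  obtain ⟨n, hn : q ≫ n = ψ.hom₂⟩ := (hq _ (hPQ _ hB₂)).2 ψ.hom₂
  have : IsIso n := (isLocal_iff_isIso _ n hZ (hPQ _ hB₂)).1
    (MorphismProperty.of_precomp _ q n hq (hn ▸ hb₂))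
  rw [← extensionProduct_isoClosure_right]
  exact ⟨A₂, Z, φ.hom₂, q, r, hTZ, hA₂, B₂, hB₂, ⟨asIso n⟩⟩

lemma isTriangulated_extensionProduct [P.IsTriangulated] [Q.IsTriangulated]
    (hPQ : Q ≤ P.rightOrthogonal) : (P.extensionProduct Q).IsTriangulated :=
  have : (P.extensionProduct Q).IsTriangulatedClosed₂ := .mk' (extensionProduct_ext₂ hPQ)
  have : (P.extensionProduct Q).ContainsZero :=
    let ⟨Z, hZ, hPZ⟩ := P.exists_prop_of_containsZero
    ⟨Z, hZ, P.le_extensionProduct_left Q Z hPZ⟩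
  { }

end Pretriangulated

section Adjoints

variable {C : Type*} [Category C] {P : ObjectProperty C}

section Coreflection

variable {R : C → C} (hR : ∀ X, P (R X)) {ε : ∀ X, R X ⟶ X} (hε : ∀ X, P.isColocal (ε X))

noncomputable def homEquivOfIsColocal (W : P.FullSubcategory) (X : C) :
    (P.ι.obj W ⟶ X) ≃ (W ⟶ ⟨R X, hR X⟩) :=
  ((hε X).homEquiv W.obj W.property).symm.trans
    (P.fullyFaithfulι.homEquiv (X := W) (Y := ⟨R X, hR X⟩)).symm

lemma homEquivOfIsColocal_hom_comp (W : P.FullSubcategory) (X : C) (u : W.obj ⟶ X) :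
    (homEquivOfIsColocal hR hε W X u).hom ≫ ε X = u :=
  ((hε X).homEquiv W.obj W.property).apply_symm_apply u

lemma homEquivOfIsColocal_naturality (W' W : P.FullSubcategory) (X : C) (f : W' ⟶ W)
    (g : P.ι.obj W ⟶ X) :
    homEquivOfIsColocal hR hε W' X (P.ι.map f ≫ g) = f ≫ homEquivOfIsColocal hR hε W X g := by
  ext
  apply (hε X W'.obj W'.property).1
  dsimp only
  rw [FullSubcategory.comp_hom, Category.assoc, homEquivOfIsColocal_hom_comp,
    homEquivOfIsColocal_hom_comp, ι_map]

noncomputable def coreflectorOfIsColocal : C ⥤ P.FullSubcategory :=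
  Adjunction.rightAdjointOfEquiv _ (homEquivOfIsColocal_naturality hR hε)

noncomputable def adjunctionOfIsColocal : P.ι ⊣ coreflectorOfIsColocal hR hε :=
  Adjunction.adjunctionOfEquivRight _ _

lemma adjunctionOfIsColocal_counit_app (X : C) :
    (adjunctionOfIsColocal hR hε).counit.app X = ε X := by
  rw [adjunctionOfIsColocal, Adjunction.adjunctionOfEquivRight_counit_app]
  exact Category.id_comp (ε X)

end Coreflection

section Reflection

variable {L : C → C} (hL : ∀ X, P (L X)) {η : ∀ X, X ⟶ L X} (hη : ∀ X, P.isLocal (η X))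

noncomputable def homEquivOfIsLocal (X : C) (W : P.FullSubcategory) :
    ((⟨L X, hL X⟩ : P.FullSubcategory) ⟶ W) ≃ (X ⟶ P.ι.obj W) :=
  (P.fullyFaithfulι.homEquiv (X := ⟨L X, hL X⟩) (Y := W)).trans
    ((hη X).homEquiv W.obj W.property)

lemma homEquivOfIsLocal_naturality (X : C) (W W' : P.FullSubcategory) (g : W ⟶ W')
    (h : (⟨L X, hL X⟩ : P.FullSubcategory) ⟶ W) :
    homEquivOfIsLocal hL hη X W' (h ≫ g) = homEquivOfIsLocal hL hη X W h ≫ P.ι.map g :=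
  (Category.assoc _ _ _).symm

noncomputable def reflectorOfIsLocal : C ⥤ P.FullSubcategory :=
  Adjunction.leftAdjointOfEquiv _ (homEquivOfIsLocal_naturality hL hη)

noncomputable def adjunctionOfIsLocal : reflectorOfIsLocal hL hη ⊣ P.ι :=
  Adjunction.adjunctionOfEquivLeft _ _

lemma adjunctionOfIsLocal_unit_app (X : C) :
    (adjunctionOfIsLocal hL hη).unit.app X = η X := by
  rw [adjunctionOfIsLocal, Adjunction.adjunctionOfEquivLeft_unit_app]
  exact Category.comp_id (η X)

end Reflection

end Adjoints

end CategoryTheory.ObjectProperty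

namespace CategoryTheory.Triangulated.Subcategory

variable {C : Type*} [Category C] [HasZeroObject C] [HasShift C ℤ] [Preadditive C]
  [∀ n : ℤ, (shiftFunctor C n).Additive] [Pretriangulated C]

instance (S : Subcategory C) : ObjectProperty.IsTriangulated S.P where
  exists_zero := let ⟨Z, hZ, hP⟩ := S.zero'; ⟨Z, hZ, hP⟩
  isStableUnderShiftBy n := ⟨fun X hX ↦ S.shift X n hX⟩
  ext₂' := S.ext₂'

abbrev ofIsTriangulated (P : ObjectProperty C) [P.IsTriangulated] : Subcategory C where
  P := P
  zero' := let ⟨Z, hZ, hP⟩ := P.exists_prop_of_containsZero; ⟨Z, hZ, hP⟩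
  shift X n hX := P.le_shift n X hX
  ext₂' := P.ext_of_isTriangulatedClosed₂'

end CategoryTheory.Triangulated.Subcategory

open CategoryTheory.ObjectProperty

/-- Bondal–Kapranov: if `(𝒜, ℬ)` is an admissible pair in a triangulated
category `𝒟` (i.e. `Hom(A,B) = 0` for `A ∈ 𝒜`, `B ∈ ℬ`, and `𝒜`, `ℬ` together generate
`𝒟`), then the inclusion of `𝒜` admits a right adjoint `ι`, the inclusion of `ℬ` admits
a left adjoint `jB`, and every `X` fits in a distinguished triangle `ι X ⟶ X ⟶ jB X ⟶`. -/
theorem admissible_pair_adjoints_and_triangle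
    (D : Type*) [Category D] [HasZeroObject D] [Preadditive D] [HasShift D ℤ]
    [∀ n : ℤ, (shiftFunctor D n).Additive] [Pretriangulated D]
    (A B : Triangulated.Subcategory D)
    [ObjectProperty.IsClosedUnderIsomorphisms A.P] [ObjectProperty.IsClosedUnderIsomorphisms B.P]
    (horth : ∀ (X Y : D), A.P X → B.P Y → ∀ f : X ⟶ Y, f = 0)
    (hgen : ∀ (T : Triangulated.Subcategory D), ObjectProperty.IsClosedUnderIsomorphisms T.P →
      (∀ X, A.P X → T.P X) → (∀ X, B.P X → T.P X) → ∀ X, T.P X) :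
    ∃ (ι : D ⥤ ObjectProperty.FullSubcategory A.P) (adj₁ : ObjectProperty.ι A.P ⊣ ι)
      (jB : D ⥤ ObjectProperty.FullSubcategory B.P) (adj₂ : jB ⊣ ObjectProperty.ι B.P),
      ∀ X : D,
        ∃ δ : (ObjectProperty.ι B.P).obj (jB.obj X) ⟶
            ((ObjectProperty.ι A.P).obj (ι.obj X))⟦(1 : ℤ)⟧,
          Triangle.mk (adj₁.counit.app X) (adj₂.unit.app X) δ ∈ distTriang D := by
  have hBA : B.P ≤ rightOrthogonal A.P := fun Y hY X f hX ↦ horth X Y hX hY f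
  have := isTriangulated_extensionProduct hBA
  have hdec : ∀ X, extensionProduct A.P B.P X :=
    hgen (Subcategory.ofIsTriangulated (extensionProduct A.P B.P)) inferInstance
      (le_extensionProduct_left B.P) (le_extensionProduct_right A.P)
  choose a b f g d hT ha hb using hdec
  have hf X : isColocal A.P (f X) := isColocal_mor₁_of_distTriang (hT X) (hBA _ (hb X))
  have hg X : isLocal B.P (g X) :=
    isLocal_mor₂_of_distTriang (hT X) fun _ u hY ↦ horth _ _ (ha X) hY u
  refine ⟨_, adjunctionOfIsColocal ha hf, _, adjunctionOfIsLocal hb hg, fun X ↦ ⟨d X, ?_⟩⟩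
  rw [adjunctionOfIsColocal_counit_app, adjunctionOfIsLocal_unit_app]
  exact hT X
end

section
/- Let 𝒟 be a triangulated category, N an object, and suppose [P] ∈ {[N_1]} * {[N_2]} * ⋯ * {[N_j]} * {[N]} for objects N_1, …, N_j, N. If Hom^i(N_k, M) = 0 for all i ≤ 0 and all k, and Hom^i(N, M) = 0 for all i < 0, then Hom^i(P, M) = 0 for all i < 0. -/
open CategoryTheory CategoryTheory.Pretriangulated

/-!
Maps out of an extension `X ⟶ Y ⟶ Z ⟶ X⟦1⟧` into a fixed object `W` vanish as soon as maps
out of `X` and out of `Z` do: a map `Y ⟶ W` killing `X` factors through `Z`. Applying this with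
`W = M⟦i⟧`, `i < 0`, along the chain `Q 0 ≅ N, Q 1, …, Q j ≅ P` gives the theorem.
-/

namespace CategoryTheory

lemma Iso.eq_zero_of_forall_eq_zero {C : Type*} [Category C] [Limits.HasZeroMorphisms C]
    {X X' W : C} (e : X ≅ X') (h : ∀ ψ : X ⟶ W, ψ = 0) (φ : X' ⟶ W) : φ = 0 :=
  (cancel_epi e.hom).1 (by rw [h (e.hom ≫ φ), Limits.comp_zero])

namespace Pretriangulated

variable {C : Type*} [Category C] [Limits.HasZeroObject C] [Preadditive C] [HasShift C ℤ]
  [∀ n : ℤ, (shiftFunctor C n).Additive] [Pretriangulated C]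

lemma eq_zero_of_distTriang_of_forall_obj₁_of_forall_obj₃ {T : Triangle C}
    (hT : T ∈ distTriang C) {W : C} (h₁ : ∀ ψ : T.obj₁ ⟶ W, ψ = 0)
    (h₃ : ∀ ψ : T.obj₃ ⟶ W, ψ = 0) (φ : T.obj₂ ⟶ W) : φ = 0 := by
  obtain ⟨ψ, rfl⟩ := Triangle.yoneda_exact₂ T hT φ (h₁ _)
  rw [h₃ ψ, Limits.comp_zero]

lemma eq_zero_of_chain_of_distTriang {j : ℕ} {X : Fin j → C} {Q : ℕ → C} {W : C}
    (hT : ∀ k : Fin j, ∃ (f : X k ⟶ Q (k + 1)) (g : Q (k + 1) ⟶ Q k)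
      (h : Q k ⟶ (X k)⟦(1 : ℤ)⟧), Triangle.mk f g h ∈ distTriang C)
    (hX : ∀ (k : Fin j) (ψ : X k ⟶ W), ψ = 0) (hQ₀ : ∀ ψ : Q 0 ⟶ W, ψ = 0) :
    ∀ k ≤ j, ∀ φ : Q k ⟶ W, φ = 0
  | 0, _ => hQ₀
  | k + 1, hk => by
    obtain ⟨f, g, h, hdist⟩ := hT ⟨k, hk⟩
    exact eq_zero_of_distTriang_of_forall_obj₁_of_forall_obj₃ hdist (hX ⟨k, hk⟩)
      (eq_zero_of_chain_of_distTriang hT hX hQ₀ k (Nat.le_of_succ_le hk))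

end Pretriangulated

end CategoryTheory

/-- the inductive vanishing argument of Proposition 3.10: suppose
`[P] ∈ {[N₁]} * ⋯ * {[N_j]} * {[N]}`, i.e. `P ≅ Q j` where `Q 0 ≅ N` and each `Q (k+1)`
is an extension of `Q k` by `N (k+1)` via a distinguished triangle
`N_{k+1} ⟶ Q (k+1) ⟶ Q k ⟶`.  If `Hom^i(N_k, M) = 0` for all `i ≤ 0` and all `k`, and
`Hom^i(N, M) = 0` for all `i < 0`, then `Hom^i(P, M) = 0` for all `i < 0`. -/
theorem hom_neg_vanishing_of_star_chain
    (D : Type*) [Category D] [Limits.HasZeroObject D] [Preadditive D]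
    [HasShift D ℤ] [∀ n : ℤ, (shiftFunctor D n).Additive] [Pretriangulated D]
    (j : ℕ) (Nk : Fin j → D) (N M P : D)
    (Q : ℕ → D) (e₀ : Q 0 ≅ N) (eP : Q j ≅ P)
    (tri : ∀ k : Fin j, ∃ (f : Nk k ⟶ Q (k + 1)) (g : Q (k + 1) ⟶ Q k)
      (h : Q k ⟶ (Nk k)⟦(1 : ℤ)⟧), Triangle.mk f g h ∈ distTriang D)
    (hNk : ∀ (k : Fin j) (i : ℤ), i ≤ 0 → ∀ ψ : Nk k ⟶ M⟦i⟧, ψ = 0)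
    (hN : ∀ i : ℤ, i < 0 → ∀ ψ : N ⟶ M⟦i⟧, ψ = 0) :
    ∀ i : ℤ, i < 0 → ∀ φ : P ⟶ M⟦i⟧, φ = 0 := by
  intro i hi
  have hQ₀ : ∀ ψ : Q 0 ⟶ M⟦i⟧, ψ = 0 :=
    e₀.symm.eq_zero_of_forall_eq_zero (hN i hi)
  exact eP.eq_zero_of_forall_eq_zero <|
    eq_zero_of_chain_of_distTriang tri (fun k => hNk k i hi.le) hQ₀ j le_rfl
end
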